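/- arXiv:2305.17049 — 2 statements merged into one kernel-verified Lean document; each statement's English description precedes it below -/
import Mathlib

section
/- Under Condition J ≫ λ,h > 0, L > (2J/(λ-h))³ (and non-degeneracy of certain ratios), the homogeneous plus configuration +1 is the unique ground state of the Blume–Capel Hamiltonian with zero-boundary conditions, i.e., H(+1) < H(η) for all η ≠ +1. -/
open Finset

noncomputable section

def Lam (L : ℕ) : Finset (ℤ × ℤ) := Finset.Icc 1 (L : ℤ) ×ˢ Finset.Icc 1 (L : ℤ)

/-- The Blume–Capel Hamiltonian with zero-boundary conditions on `Λ = {1,…,L}²`. -/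
noncomputable def H (L : ℕ) (J lam h : ℝ) (η : ℤ × ℤ → ℤ) : ℝ :=
  J / 2 * ∑ i ∈ Lam L, ∑ j ∈ Lam L,
      (if (i.1 - j.1) ^ 2 + (i.2 - j.2) ^ 2 = 1 then ((η i : ℝ) - (η j : ℝ)) ^ 2 else 0)
    + J * ∑ i ∈ Lam L,
        ((4 : ℝ) - (((Lam L).filter fun j => (i.1 - j.1) ^ 2 + (i.2 - j.2) ^ 2 = 1)).card)
          * (η i : ℝ) ^ 2
    - lam * ∑ i ∈ Lam L, (η i : ℝ) ^ 2
    - h * ∑ i ∈ Lam L, (η i : ℝ)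

/-- A configuration takes values in `{-1,0,+1}`. -/
def validCfg (η : ℤ × ℤ → ℤ) : Prop := ∀ i, η i = -1 ∨ η i = 0 ∨ η i = 1

/-- Two configurations are communicating if they differ at most at one site. -/
def commStep (η η' : ℤ × ℤ → ℤ) : Prop := ∃ i, ∀ j, j ≠ i → η j = η' j

/-!
The Hamiltonian splits into one-dimensional chain Hamiltonians, one for each row and each column
of `Λ`, each chain carrying half of the single-site energy `-λ η² - h η`; so it suffices that `+1`
is the unique ground state of every chain. An integer profile that does not vanish on the chain
has to climb from the boundary value `0` and come back to it, so its bond energy is at least `2`,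
the bond energy of `+1`, while every site differing from `+1` costs field energy `h` or
`(λ + h) / 2`. A chain vanishing identically saves the bond energy `2J` but pays the field
energy `(λ + h) L / 2`, and `L > (2J/(λ-h))³` forces `(λ + h) L > 4J`.
-/

lemma sq_add_sq_eq_one_iff {i j : ℤ × ℤ} :
    (i.1 - j.1) ^ 2 + (i.2 - j.2) ^ 2 = 1 ↔
      j = (i.1 + 1, i.2) ∨ j = (i.1 - 1, i.2) ∨ j = (i.1, i.2 + 1) ∨ j = (i.1, i.2 - 1) := by
  obtain ⟨a, b⟩ := i
  obtain ⟨c, d⟩ := j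
  simp only [Prod.mk.injEq]
  constructor
  · intro h
    have hu := abs_le.1 <| (sq_le_one_iff_abs_le_one (a - c)).1 (by nlinarith)
    have hv := abs_le.1 <| (sq_le_one_iff_abs_le_one (b - d)).1 (by nlinarith)
    have hu' : a - c = -1 ∨ a - c = 0 ∨ a - c = 1 := by omega
    have hv' : b - d = -1 ∨ b - d = 0 ∨ b - d = 1 := by omega
    rcases hu' with hu' | hu' | hu' <;> rcases hv' with hv' | hv' | hv' <;>
      simp only [hu', hv'] at h <;> norm_num at h <;> omega
  · rintro (⟨rfl, rfl⟩ | ⟨rfl, rfl⟩ | ⟨rfl, rfl⟩ | ⟨rfl, rfl⟩) <;> ring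

lemma sum_ite_adjacent {M : Type*} [AddCommMonoid M] (s : Finset (ℤ × ℤ)) (i : ℤ × ℤ)
    (F : ℤ × ℤ → M) :
    ∑ j ∈ s, (if (i.1 - j.1) ^ 2 + (i.2 - j.2) ^ 2 = 1 then F j else 0) =
      (if (i.1 + 1, i.2) ∈ s then F (i.1 + 1, i.2) else 0) +
      (if (i.1 - 1, i.2) ∈ s then F (i.1 - 1, i.2) else 0) +
      (if (i.1, i.2 + 1) ∈ s then F (i.1, i.2 + 1) else 0) +
      (if (i.1, i.2 - 1) ∈ s then F (i.1, i.2 - 1) else 0) := by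
  have hfilter : s.filter (fun j => (i.1 - j.1) ^ 2 + (i.2 - j.2) ^ 2 = 1) =
      {(i.1 + 1, i.2), (i.1 - 1, i.2), (i.1, i.2 + 1), (i.1, i.2 - 1)} ∩ s := by
    ext j; simp [sq_add_sq_eq_one_iff, and_comm]
  rw [← sum_filter, hfilter, ← sum_ite_mem, sum_insert (by simp; omega), sum_insert (by simp),
    sum_insert (by simp; omega), sum_singleton, add_assoc, add_assoc]

lemma card_filter_adjacent (s : Finset (ℤ × ℤ)) (i : ℤ × ℤ) :
    ((s.filter fun j => (i.1 - j.1) ^ 2 + (i.2 - j.2) ^ 2 = 1).card : ℝ) =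
      (if (i.1 + 1, i.2) ∈ s then 1 else 0) + (if (i.1 - 1, i.2) ∈ s then 1 else 0) +
      (if (i.1, i.2 + 1) ∈ s then 1 else 0) + (if (i.1, i.2 - 1) ∈ s then 1 else 0) := by
  rw [card_filter]
  push_cast
  exact sum_ite_adjacent s i fun _ => (1 : ℝ)

/-- Bond energy of a line `1, …, N` with zero boundary condition: `y 1 ^ 2` and `y N ^ 2` are the
bonds to the outside sites `0` and `N + 1`. -/
def chainEnergy {R : Type*} [CommRing R] (N : ℕ) (y : ℤ → R) : R :=
  y 1 ^ 2 + y N ^ 2 + ∑ a ∈ Ico 1 (N : ℤ), (y (a + 1) - y a) ^ 2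

lemma chainEnergy_eq_sum {K : Type*} [Field K] [CharZero K] {N : ℕ} (hN : 1 ≤ N)
    (y : ℤ → K) :
    chainEnergy N y = ∑ a ∈ Icc 1 (N : ℤ),
      ((if a + 1 ∈ Icc 1 (N : ℤ) then (y a - y (a + 1)) ^ 2 / 2 else y a ^ 2) +
        (if a - 1 ∈ Icc 1 (N : ℤ) then (y a - y (a - 1)) ^ 2 / 2 else y a ^ 2)) := by
  have hN' : (1 : ℤ) ≤ N := by exact_mod_cast hN
  have up : ∑ a ∈ Icc 1 (N : ℤ),
      (if a + 1 ∈ Icc 1 (N : ℤ) then (y a - y (a + 1)) ^ 2 / 2 else y a ^ 2) =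
        y N ^ 2 + ∑ a ∈ Ico 1 (N : ℤ), (y (a + 1) - y a) ^ 2 / 2 := by
    calc _ = ∑ a ∈ insert (N : ℤ) (Ico 1 (N : ℤ)),
          (if a + 1 ∈ Icc 1 (N : ℤ) then (y a - y (a + 1)) ^ 2 / 2 else y a ^ 2) := by
          rw [Ico_insert_right hN']
      _ = _ := by
        rw [sum_insert right_notMem_Ico, if_neg (by simp)]
        refine congrArg _ (sum_congr rfl fun a ha => ?_)
        rw [mem_Ico] at ha
        rw [if_pos (by rw [mem_Icc]; omega), ← neg_sub, neg_sq]
  have down : ∑ a ∈ Icc 1 (N : ℤ),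
      (if a - 1 ∈ Icc 1 (N : ℤ) then (y a - y (a - 1)) ^ 2 / 2 else y a ^ 2) =
        y 1 ^ 2 + ∑ a ∈ Ico 1 (N : ℤ), (y (a + 1) - y a) ^ 2 / 2 := by
    calc _ = ∑ a ∈ insert (1 : ℤ) (Ico (1 + 1) ((N : ℤ) + 1)),
          (if a - 1 ∈ Icc 1 (N : ℤ) then (y a - y (a - 1)) ^ 2 / 2 else y a ^ 2) := by
          congr 1; ext; simp only [mem_Icc, mem_insert, mem_Ico]; omega
      _ = _ := by
        rw [sum_insert (by simp), if_neg (by simp), ← sum_Ico_add']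
        refine congrArg _ (sum_congr rfl fun a ha => ?_)
        rw [mem_Ico] at ha
        rw [if_pos (by rw [mem_Icc]; omega), add_sub_cancel_right]
  rw [sum_add_distrib, up, down, chainEnergy, ← sum_div]
  ring

lemma H_eq_chainEnergy (L : ℕ) (J lam h : ℝ) (η : ℤ × ℤ → ℤ) :
    H L J lam h η =
      J * (∑ b ∈ Icc 1 (L : ℤ), chainEnergy L (fun a => (η (a, b) : ℝ)) +
        ∑ a ∈ Icc 1 (L : ℤ), chainEnergy L (fun b => (η (a, b) : ℝ))) -
      lam * ∑ i ∈ Lam L, (η i : ℝ) ^ 2 - h * ∑ i ∈ Lam L, (η i : ℝ) := by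
  -- a bond inside `Λ` is seen from both of its ends, a bond leaving `Λ` is a boundary term
  let bond (i j : ℤ × ℤ) : ℝ :=
    if j ∈ Lam L then ((η i : ℝ) - η j) ^ 2 / 2 else (η i : ℝ) ^ 2
  have site (i : ℤ × ℤ) :
      J / 2 * ∑ j ∈ Lam L,
          (if (i.1 - j.1) ^ 2 + (i.2 - j.2) ^ 2 = 1 then ((η i : ℝ) - η j) ^ 2 else 0) +
        J * (((4 : ℝ) - ((Lam L).filter fun j => (i.1 - j.1) ^ 2 + (i.2 - j.2) ^ 2 = 1).card) *
          (η i : ℝ) ^ 2) =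
      J * ((bond i (i.1 + 1, i.2) + bond i (i.1 - 1, i.2)) +
        (bond i (i.1, i.2 + 1) + bond i (i.1, i.2 - 1))) := by
    rw [sum_ite_adjacent, card_filter_adjacent]
    simp only [bond]
    split_ifs <;> ring
  have rows : ∑ i ∈ Lam L, (bond i (i.1 + 1, i.2) + bond i (i.1 - 1, i.2)) =
      ∑ b ∈ Icc 1 (L : ℤ), chainEnergy L (fun a => (η (a, b) : ℝ)) := by
    rw [Lam, sum_product_right]
    refine sum_congr rfl fun b hb => ?_
    rw [chainEnergy_eq_sum (by have := mem_Icc.1 hb; omega)]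
    simp only [bond, Lam, mem_product, hb, and_true]
  have cols : ∑ i ∈ Lam L, (bond i (i.1, i.2 + 1) + bond i (i.1, i.2 - 1)) =
      ∑ a ∈ Icc 1 (L : ℤ), chainEnergy L (fun b => (η (a, b) : ℝ)) := by
    rw [Lam, sum_product]
    refine sum_congr rfl fun a ha => ?_
    rw [chainEnergy_eq_sum (by have := mem_Icc.1 ha; omega)]
    simp only [bond, Lam, mem_product, ha, true_and]
  rw [H, mul_sum, mul_sum, ← sum_add_distrib, sum_congr rfl fun i _ => site i, ← mul_sum,
    sum_add_distrib, rows, cols]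

/-- Every site lies on one row and one column of `Λ`, so each line carries half of the field
energy. -/
def chainH (N : ℕ) (J lam h : ℝ) (y : ℤ → ℤ) : ℝ :=
  J * chainEnergy N (fun a => (y a : ℝ)) - lam / 2 * ∑ a ∈ Icc 1 (N : ℤ), (y a : ℝ) ^ 2 -
    h / 2 * ∑ a ∈ Icc 1 (N : ℤ), (y a : ℝ)

lemma H_eq_sum_chainH (L : ℕ) (J lam h : ℝ) (η : ℤ × ℤ → ℤ) :
    H L J lam h η = ∑ b ∈ Icc 1 (L : ℤ), chainH L J lam h (fun a => η (a, b)) +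
      ∑ a ∈ Icc 1 (L : ℤ), chainH L J lam h (fun b => η (a, b)) := by
  have halves (f : ℤ × ℤ → ℝ) : ∑ i ∈ Lam L, f i =
      (∑ b ∈ Icc 1 (L : ℤ), ∑ a ∈ Icc 1 (L : ℤ), f (a, b) +
        ∑ a ∈ Icc 1 (L : ℤ), ∑ b ∈ Icc 1 (L : ℤ), f (a, b)) / 2 := by
    rw [← sum_product, ← sum_product_right, Lam]
    ring
  rw [H_eq_chainEnergy, halves, halves]
  simp only [chainH, sum_sub_distrib, ← mul_sum]
  ring

lemma Int.sum_Ico_sub {M : Type*} [AddCommGroup M] (f : ℤ → M) {m n : ℤ} (hmn : m ≤ n) :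
    ∑ a ∈ Ico m n, (f (a + 1) - f a) = f n - f m := by
  induction n, hmn using Int.leInduction with
  | base => simp
  | succ n hmn ih =>
    rw [← insert_Ico_right_eq_Ico_add_one hmn, sum_insert right_notMem_Ico, ih]
    abel

lemma Int.abs_le_sq (m : ℤ) : |m| ≤ m ^ 2 :=
  (Int.abs_eq_natAbs m).trans_le (Int.natAbs_le_self_sq m)

lemma abs_sub_le_sum_Ico_sq (y : ℤ → ℤ) {m n : ℤ} (hmn : m ≤ n) :
    |y n - y m| ≤ ∑ a ∈ Ico m n, (y (a + 1) - y a) ^ 2 :=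
  calc |y n - y m| = |∑ a ∈ Ico m n, (y (a + 1) - y a)| := by rw [Int.sum_Ico_sub y hmn]
    _ ≤ ∑ a ∈ Ico m n, |y (a + 1) - y a| := abs_sum_le_sum_abs _ _
    _ ≤ _ := sum_le_sum fun a _ => Int.abs_le_sq _

lemma two_le_chainEnergy {N : ℕ} {y : ℤ → ℤ} {a₀ : ℤ} (ha₀ : a₀ ∈ Icc 1 (N : ℤ))
    (hy : y a₀ ≠ 0) : 2 ≤ chainEnergy N y := by
  rw [mem_Icc] at ha₀
  have hup := abs_sub_le_sum_Ico_sq y ha₀.1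
  have hdown := abs_sub_le_sum_Ico_sq y ha₀.2
  have h1 := Int.abs_le_sq (y 1)
  have hN := Int.abs_le_sq (y N)
  have h1' := abs_sub_abs_le_abs_sub (y a₀) (y 1)
  have hN' : |y a₀| - |y N| ≤ |y N - y a₀| :=
    abs_sub_comm (y a₀) (y N) ▸ abs_sub_abs_le_abs_sub _ _
  have h₀ := Int.one_le_abs hy
  rw [chainEnergy, ← Ico_union_Ico_eq_Ico ha₀.1 ha₀.2,
    sum_union (Ico_disjoint_Ico_consecutive _ _ _)]
  linarith

def fieldCost (lam h : ℝ) (t : ℤ) : ℝ := lam * (1 - (t : ℝ) ^ 2) + h * (1 - t)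

lemma fieldCost_nonneg {lam h : ℝ} {t : ℤ} (ht : t = -1 ∨ t = 0 ∨ t = 1) (hh : 0 ≤ h)
    (hlh : 0 ≤ lam + h) : 0 ≤ fieldCost lam h t := by
  rcases ht with rfl | rfl | rfl <;> norm_num [fieldCost] <;> linarith

lemma fieldCost_pos {lam h : ℝ} {t : ℤ} (ht : t = -1 ∨ t = 0 ∨ t = 1) (ht1 : t ≠ 1)
    (hh : 0 < h) (hlh : 0 < lam + h) : 0 < fieldCost lam h t := by
  rcases ht with rfl | rfl | rfl <;> norm_num [fieldCost] at * <;> linarith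

lemma chainH_sub_chainH_one (N : ℕ) (J lam h : ℝ) (y : ℤ → ℤ) :
    chainH N J lam h y - chainH N J lam h (fun _ => 1) =
      J * (chainEnergy N (fun a => (y a : ℝ)) - 2) +
        (∑ a ∈ Icc 1 (N : ℤ), fieldCost lam h (y a)) / 2 := by
  have hE : chainEnergy N (fun _ => (1 : ℝ)) = 2 := by norm_num [chainEnergy]
  simp only [chainH, fieldCost, Int.cast_one, one_pow, hE, mul_sub, mul_one, sum_add_distrib,
    sum_sub_distrib, ← mul_sum, sum_const, nsmul_eq_mul]
  ring

section GroundState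

variable {N : ℕ} {J lam h : ℝ} {y : ℤ → ℤ}

lemma chainH_one_lt_of_forall_eq_zero (hJ : 0 ≤ J) (hN : 4 * J < (lam + h) * N)
    (hy : ∀ a ∈ Icc 1 (N : ℤ), y a = 0) :
    chainH N J lam h (fun _ => 1) < chainH N J lam h y := by
  have hzero : fieldCost lam h 0 = lam + h := by simp [fieldCost]
  have hcost : ∑ a ∈ Icc 1 (N : ℤ), fieldCost lam h (y a) = (lam + h) * N := by
    rw [sum_congr rfl fun a ha => by rw [hy a ha, hzero], sum_const, Int.card_Icc,
      add_sub_cancel_right, Int.toNat_natCast, nsmul_eq_mul, mul_comm]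
  have hE : 0 ≤ chainEnergy N (fun a => (y a : ℝ)) := by unfold chainEnergy; positivity
  rw [← sub_pos, chainH_sub_chainH_one, hcost]
  nlinarith

lemma chainH_one_add_le_of_exists_ne_zero (hJ : 0 ≤ J)
    (hy : ∃ a ∈ Icc 1 (N : ℤ), y a ≠ 0) :
    chainH N J lam h (fun _ => 1) + (∑ a ∈ Icc 1 (N : ℤ), fieldCost lam h (y a)) / 2 ≤
      chainH N J lam h y := by
  obtain ⟨a₀, ha₀, hy₀⟩ := hy
  have hE : (2 : ℝ) ≤ chainEnergy N (fun a => (y a : ℝ)) := by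
    have := two_le_chainEnergy ha₀ hy₀
    rw [chainEnergy] at this ⊢
    exact_mod_cast this
  linarith [chainH_sub_chainH_one N J lam h y, mul_nonneg hJ (sub_nonneg.2 hE)]

lemma chainH_one_le (hJ : 0 ≤ J) (hh : 0 < h) (hN : 4 * J < (lam + h) * N)
    (hy : ∀ a ∈ Icc 1 (N : ℤ), y a = -1 ∨ y a = 0 ∨ y a = 1) :
    chainH N J lam h (fun _ => 1) ≤ chainH N J lam h y := by
  by_cases hz : ∀ a ∈ Icc 1 (N : ℤ), y a = 0
  · exact (chainH_one_lt_of_forall_eq_zero hJ hN hz).le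
  push Not at hz
  have hlh : 0 ≤ lam + h := by nlinarith
  have hcost : 0 ≤ ∑ a ∈ Icc 1 (N : ℤ), fieldCost lam h (y a) :=
    sum_nonneg fun a ha => fieldCost_nonneg (hy a ha) hh.le hlh
  linarith [chainH_one_add_le_of_exists_ne_zero (lam := lam) (h := h) hJ hz]

lemma chainH_one_lt (hJ : 0 ≤ J) (hh : 0 < h) (hN : 4 * J < (lam + h) * N)
    (hy : ∀ a ∈ Icc 1 (N : ℤ), y a = -1 ∨ y a = 0 ∨ y a = 1)
    (hne : ∃ a ∈ Icc 1 (N : ℤ), y a ≠ 1) :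
    chainH N J lam h (fun _ => 1) < chainH N J lam h y := by
  by_cases hz : ∀ a ∈ Icc 1 (N : ℤ), y a = 0
  · exact chainH_one_lt_of_forall_eq_zero hJ hN hz
  push Not at hz
  have hlh : 0 < lam + h := by nlinarith
  obtain ⟨a₀, ha₀, hy₀⟩ := hne
  have hcost : 0 < ∑ a ∈ Icc 1 (N : ℤ), fieldCost lam h (y a) :=
    sum_pos' (fun a ha => fieldCost_nonneg (hy a ha) hh.le hlh.le)
      ⟨a₀, ha₀, fieldCost_pos (hy a₀ ha₀) hy₀ hh hlh⟩
  linarith [chainH_one_add_le_of_exists_ne_zero (lam := lam) (h := h) hJ hz]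

end GroundState

lemma four_mul_lt_mul_of_cube_lt {J lam h L : ℝ} (hh : 0 < h) (hhl : h < lam)
    (hJ : lam - h ≤ J) (hL : (2 * J / (lam - h)) ^ 3 < L) : 4 * J < (lam + h) * L := by
  have hd : 0 < lam - h := sub_pos.2 hhl
  set t := 2 * J / (lam - h) with ht
  have htd : t * (lam - h) = 2 * J := div_mul_cancel₀ _ hd.ne'
  have ht2 : 2 ≤ t := by rw [ht, le_div_iff₀ hd]; linarith
  calc 4 * J < 2 * J * t ^ 2 := by nlinarith
    _ = (lam - h) * t ^ 3 := by rw [← htd]; ring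
    _ ≤ (lam + h) * t ^ 3 := by gcongr; linarith
    _ < (lam + h) * L := by gcongr; linarith

theorem plus_is_unique_ground_state_general (L : ℕ) (J lam h : ℝ)
    (hh : 0 < h) (hhl : h < lam) (hJ : 10 * lam < J)
    (hL : (L : ℝ) > (2 * J / (lam - h)) ^ 3) :
    ∀ η : ℤ × ℤ → ℤ, validCfg η → (∃ i ∈ Lam L, η i ≠ 1) →
      H L J lam h (fun _ => 1) < H L J lam h η := by
  rintro η hη ⟨i, hi, hi1⟩
  have hJ0 : 0 ≤ J := by linarith
  have hL' := four_mul_lt_mul_of_cube_lt hh hhl (by linarith) hL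
  rw [Lam, mem_product] at hi
  rw [H_eq_sum_chainH, H_eq_sum_chainH]
  refine add_lt_add_of_lt_of_le (sum_lt_sum (fun b _ => chainH_one_le hJ0 hh hL' fun a _ => hη _)
    ⟨i.2, hi.2, chainH_one_lt hJ0 hh hL' (fun a _ => hη _) ⟨i.1, hi.1, hi1⟩⟩)
    (sum_le_sum fun a _ => chainH_one_le hJ0 hh hL' fun b _ => hη _)

theorem plus_is_unique_ground_state (L : ℕ) (J lam h : ℝ)
    (hh : 0 < h) (hhl : h < lam) (hJ : 10 * lam < J)
    (hL : (L : ℝ) > (2 * J / (lam - h)) ^ 3)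
    (hnd1 : ∀ n : ℤ, 2 * J / (lam + h) ≠ n)
    (hnd2 : ∀ n : ℤ, 2 * J / (lam - h) ≠ n)
    (hnd3 : ∀ n : ℤ, (2 * J + lam - h) / (lam + h) ≠ n)
    (hnd4 : ∀ n : ℤ, (J + lam + h) / h ≠ n) :
    ∀ η : ℤ × ℤ → ℤ, validCfg η → (∃ i ∈ Lam L, η i ≠ 1) →
      H L J lam h (fun _ => 1) < H L J lam h η :=
  plus_is_unique_ground_state_general L J lam h hh hhl hJ hL
end
end

section
/- If a configuration η contains a rectangular cluster of pluses in a sea of zeroes with some convex side of length ℓ₁ < 2J/(λ+h), then shrinking that side (flipping its ℓ₁ pluses to zero one by one starting from a corner) yields a path along which the first ℓ₁-1 flips each increase the energy by exactly λ+h and the last flip decreases it by 2J-(λ+h); hence the final configuration η' satisfies H(η') = H(η) + (λ+h)(ℓ₁) - 2J < H(η) and the maximal excess over H(η) along the path is (λ+h)(ℓ₁-1) < 2J. -/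
open Finset

noncomputable section

/-- An `m×l` rectangular cluster of pluses (lower-left corner `(a,b)`) in a sea of zeroes,
whose right column (the convex side of length `l`) has had its top `k` pluses flipped to
zero, one by one starting from the corner. -/
def shrinkCfg (a b : ℤ) (m l k : ℕ) : ℤ × ℤ → ℤ := fun i =>
  if i ∈ (Finset.Icc a (a + (m : ℤ) - 1) ×ˢ Finset.Icc b (b + (l : ℤ) - 1)) \
      (({a + (m : ℤ) - 1} : Finset ℤ) ×ˢ Finset.Icc (b + (l : ℤ) - (k : ℤ)) (b + (l : ℤ) - 1))
  then 1 else 0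

lemma nn_iff (u v : ℤ) : u^2 + v^2 = 1 ↔ (u=1∧v=0)∨(u=-1∧v=0)∨(u=0∧v=1)∨(u=0∧v=-1) := by
  constructor
  · intro h
    have hu1 : u ≤ 1 := by nlinarith [sq_nonneg v, sq_nonneg (u-1)]
    have hu2 : -1 ≤ u := by nlinarith [sq_nonneg v, sq_nonneg (u+1)]
    have hv1 : v ≤ 1 := by nlinarith [sq_nonneg u, sq_nonneg (v-1)]
    have hv2 : -1 ≤ v := by nlinarith [sq_nonneg u, sq_nonneg (v+1)]
    interval_cases u <;> interval_cases v <;> simp_all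
  · rintro (⟨rfl,rfl⟩|⟨rfl,rfl⟩|⟨rfl,rfl⟩|⟨rfl,rfl⟩) <;> norm_num

lemma filter_nn (L : ℕ) (x y : ℤ)
    (h1 : (x-1,y) ∈ Lam L) (h2 : (x+1,y) ∈ Lam L)
    (h3 : (x,y-1) ∈ Lam L) (h4 : (x,y+1) ∈ Lam L) :
    ((Lam L).filter fun j => (x - j.1)^2 + (y - j.2)^2 = 1)
      = {(x-1,y),(x+1,y),(x,y-1),(x,y+1)} := by
  ext ⟨j1, j2⟩
  simp only [Finset.mem_filter, Finset.mem_insert, Finset.mem_singleton, Prod.mk.injEq]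
  constructor
  · rintro ⟨hj, hnn⟩
    rcases (nn_iff _ _).1 hnn with ⟨h,h'⟩|⟨h,h'⟩|⟨h,h'⟩|⟨h,h'⟩
    · exact Or.inl ⟨by omega, by omega⟩
    · exact Or.inr (Or.inl ⟨by omega, by omega⟩)
    · exact Or.inr (Or.inr (Or.inl ⟨by omega, by omega⟩))
    · exact Or.inr (Or.inr (Or.inr ⟨by omega, by omega⟩))
  · rintro (⟨rfl,rfl⟩|⟨rfl,rfl⟩|⟨rfl,rfl⟩|⟨rfl,rfl⟩)
    · exact ⟨h1, by ring⟩
    · exact ⟨h2, by ring⟩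
    · exact ⟨h3, by ring⟩
    · exact ⟨h4, by ring⟩

lemma card_nbrs (x y : ℤ) :
    ({(x-1,y),(x+1,y),(x,y-1),(x,y+1)} : Finset (ℤ×ℤ)).card = 4 := by
  rw [Finset.card_insert_of_notMem (by simp [Prod.ext_iff] <;> omega),
      Finset.card_insert_of_notMem (by simp [Prod.ext_iff] <;> omega),
      Finset.card_insert_of_notMem (by simp [Prod.ext_iff] <;> omega),
      Finset.card_singleton]

lemma sum_nn (L : ℕ) (x y : ℤ) (g : ℤ×ℤ → ℝ)
    (h1 : (x-1,y) ∈ Lam L) (h2 : (x+1,y) ∈ Lam L)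
    (h3 : (x,y-1) ∈ Lam L) (h4 : (x,y+1) ∈ Lam L) :
    ∑ j ∈ Lam L, (if (x - j.1)^2 + (y - j.2)^2 = 1 then g j else 0)
      = g (x-1,y) + g (x+1,y) + g (x,y-1) + g (x,y+1) := by
  rw [← Finset.sum_filter, filter_nn L x y h1 h2 h3 h4,
      Finset.sum_insert (by simp [Prod.ext_iff] <;> omega),
      Finset.sum_insert (by simp [Prod.ext_iff] <;> omega),
      Finset.sum_insert (by simp [Prod.ext_iff] <;> omega),
      Finset.sum_singleton]
  ring

lemma sum_diff_single {α : Type*} [DecidableEq α] (s : Finset α) (f g : α → ℝ) (i₀ : α)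
    (hi : i₀ ∈ s) (hfg : ∀ j ∈ s, j ≠ i₀ → f j = g j) :
    ∑ j ∈ s, f j = ∑ j ∈ s, g j + (f i₀ - g i₀) := by
  have h : ∑ j ∈ s, (f j - g j) = f i₀ - g i₀ :=
    Finset.sum_eq_single_of_mem i₀ hi (fun j hj hne => by rw [hfg j hj hne]; ring)
  rw [Finset.sum_sub_distrib] at h; linarith

lemma H_flip (L : ℕ) (J lam h : ℝ) (η η' : ℤ × ℤ → ℤ) (x y : ℤ)
    (h0 : (x,y) ∈ Lam L) (h1 : (x-1,y) ∈ Lam L) (h2 : (x+1,y) ∈ Lam L)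
    (h3 : (x,y-1) ∈ Lam L) (h4 : (x,y+1) ∈ Lam L)
    (hval : η (x,y) = 1) (hval' : η' (x,y) = 0)
    (hagree : ∀ j, j ≠ (x,y) → η' j = η j) :
    H L J lam h η' = H L J lam h η
      + J * (((η (x-1,y) : ℝ)^2 - (1 - (η (x-1,y) : ℝ))^2)
           + ((η (x+1,y) : ℝ)^2 - (1 - (η (x+1,y) : ℝ))^2)
           + ((η (x,y-1) : ℝ)^2 - (1 - (η (x,y-1) : ℝ))^2)
           + ((η (x,y+1) : ℝ)^2 - (1 - (η (x,y+1) : ℝ))^2))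
      + lam + h := by
  classical
  -- the generic transformation of the per-site flip difference
  have hT0 : ∀ j : ℤ × ℤ, j ∈ Lam L →
      (if (x - j.1)^2 + (y - j.2)^2 = 1 then ((η' (x,y) : ℝ) - (η' j : ℝ))^2 else 0)
        - (if (x - j.1)^2 + (y - j.2)^2 = 1 then ((η (x,y) : ℝ) - (η j : ℝ))^2 else 0)
      = (if (x - j.1)^2 + (y - j.2)^2 = 1 then ((η j : ℝ)^2 - (1 - (η j : ℝ))^2) else 0) := by
    intro j hj
    by_cases hc : (x - j.1)^2 + (y - j.2)^2 = 1
    · have hne : j ≠ (x,y) := by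
        rintro rfl; simp at hc
      rw [if_pos hc, if_pos hc, if_pos hc, hagree j hne, hval, hval']
      push_cast; ring
    · rw [if_neg hc, if_neg hc, if_neg hc]; ring
  -- sum of the flip difference over the lattice
  have hT : ∑ j ∈ Lam L, ((if (x - j.1)^2 + (y - j.2)^2 = 1 then ((η j : ℝ)^2 - (1 - (η j : ℝ))^2) else 0))
      = (((η (x-1,y) : ℝ)^2 - (1 - (η (x-1,y) : ℝ))^2)
           + ((η (x+1,y) : ℝ)^2 - (1 - (η (x+1,y) : ℝ))^2)
           + ((η (x,y-1) : ℝ)^2 - (1 - (η (x,y-1) : ℝ))^2)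
           + ((η (x,y+1) : ℝ)^2 - (1 - (η (x,y+1) : ℝ))^2)) := by
    rw [sum_nn L x y (fun j => (η j : ℝ)^2 - (1 - (η j : ℝ))^2) h1 h2 h3 h4]
  -- inner sums for i ≠ (x,y)
  have inner : ∀ i ∈ Lam L, i ≠ (x,y) →
      (∑ j ∈ Lam L, if (i.1 - j.1)^2 + (i.2 - j.2)^2 = 1 then ((η' i : ℝ) - (η' j : ℝ))^2 else 0)
    = (∑ j ∈ Lam L, if (i.1 - j.1)^2 + (i.2 - j.2)^2 = 1 then ((η i : ℝ) - (η j : ℝ))^2 else 0)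
      + ((if (i.1 - x)^2 + (i.2 - y)^2 = 1 then ((η' i : ℝ) - (η' (x,y) : ℝ))^2 else 0)
       - (if (i.1 - x)^2 + (i.2 - y)^2 = 1 then ((η i : ℝ) - (η (x,y) : ℝ))^2 else 0)) := by
    intro i hi hne
    exact sum_diff_single _ _ _ (x,y) h0
      (fun j hj hjne => by rw [hagree j hjne, hagree i hne])
  have outer := sum_diff_single (Lam L)
    (fun i => ∑ j ∈ Lam L, if (i.1 - j.1)^2 + (i.2 - j.2)^2 = 1 then ((η' i : ℝ) - (η' j : ℝ))^2 else 0)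
    (fun i => (∑ j ∈ Lam L, if (i.1 - j.1)^2 + (i.2 - j.2)^2 = 1 then ((η i : ℝ) - (η j : ℝ))^2 else 0)
      + ((if (i.1 - x)^2 + (i.2 - y)^2 = 1 then ((η' i : ℝ) - (η' (x,y) : ℝ))^2 else 0)
       - (if (i.1 - x)^2 + (i.2 - y)^2 = 1 then ((η i : ℝ) - (η (x,y) : ℝ))^2 else 0)))
    (x,y) h0 inner
  
  -- beta/proj-reduced form of outer
  have outer' :
      (∑ i ∈ Lam L, ∑ j ∈ Lam L, if (i.1 - j.1)^2 + (i.2 - j.2)^2 = 1 then ((η' i : ℝ) - (η' j : ℝ))^2 else 0)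
    = (∑ i ∈ Lam L, ((∑ j ∈ Lam L, if (i.1 - j.1)^2 + (i.2 - j.2)^2 = 1 then ((η i : ℝ) - (η j : ℝ))^2 else 0)
        + ((if (i.1 - x)^2 + (i.2 - y)^2 = 1 then ((η' i : ℝ) - (η' (x,y) : ℝ))^2 else 0)
         - (if (i.1 - x)^2 + (i.2 - y)^2 = 1 then ((η i : ℝ) - (η (x,y) : ℝ))^2 else 0))))
      + ((∑ j ∈ Lam L, if (x - j.1)^2 + (y - j.2)^2 = 1 then ((η' (x,y) : ℝ) - (η' j : ℝ))^2 else 0)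
        - ((∑ j ∈ Lam L, if (x - j.1)^2 + (y - j.2)^2 = 1 then ((η (x,y) : ℝ) - (η j : ℝ))^2 else 0)
          + ((if (x - x)^2 + (y - y)^2 = 1 then ((η' (x,y) : ℝ) - (η' (x,y) : ℝ))^2 else 0)
           - (if (x - x)^2 + (y - y)^2 = 1 then ((η (x,y) : ℝ) - (η (x,y) : ℝ))^2 else 0)))) := outer
  have hcf : ¬ ((x - x)^2 + (y - y)^2 = 1) := by simp
  have claim2 : ∀ i ∈ Lam L,
      ((if (i.1 - x)^2 + (i.2 - y)^2 = 1 then ((η' i : ℝ) - (η' (x,y) : ℝ))^2 else 0)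
       - (if (i.1 - x)^2 + (i.2 - y)^2 = 1 then ((η i : ℝ) - (η (x,y) : ℝ))^2 else 0))
      = (if (x - i.1)^2 + (y - i.2)^2 = 1 then ((η i : ℝ)^2 - (1 - (η i : ℝ))^2) else 0) := by
    intro i hi
    rw [show (i.1 - x)^2 + (i.2 - y)^2 = (x - i.1)^2 + (y - i.2)^2 from by ring]
    by_cases hc : (x - i.1)^2 + (y - i.2)^2 = 1
    · have hne : i ≠ (x,y) := by rintro rfl; simp at hc
      rw [if_pos hc, if_pos hc, if_pos hc, hagree i hne, hval, hval']
      push_cast; ring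
    · rw [if_neg hc, if_neg hc, if_neg hc]; ring
  have hAB : ∑ i ∈ Lam L,
      ((if (i.1 - x)^2 + (i.2 - y)^2 = 1 then ((η' i : ℝ) - (η' (x,y) : ℝ))^2 else 0)
       - (if (i.1 - x)^2 + (i.2 - y)^2 = 1 then ((η i : ℝ) - (η (x,y) : ℝ))^2 else 0))
      = (((η (x-1,y) : ℝ)^2 - (1 - (η (x-1,y) : ℝ))^2)
           + ((η (x+1,y) : ℝ)^2 - (1 - (η (x+1,y) : ℝ))^2)
           + ((η (x,y-1) : ℝ)^2 - (1 - (η (x,y-1) : ℝ))^2)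
           + ((η (x,y+1) : ℝ)^2 - (1 - (η (x,y+1) : ℝ))^2)) := by
    rw [Finset.sum_congr rfl claim2, hT]
  have hd : (∑ j ∈ Lam L, if (x - j.1)^2 + (y - j.2)^2 = 1 then ((η' (x,y) : ℝ) - (η' j : ℝ))^2 else 0)
      - (∑ j ∈ Lam L, if (x - j.1)^2 + (y - j.2)^2 = 1 then ((η (x,y) : ℝ) - (η j : ℝ))^2 else 0)
      = (((η (x-1,y) : ℝ)^2 - (1 - (η (x-1,y) : ℝ))^2)
           + ((η (x+1,y) : ℝ)^2 - (1 - (η (x+1,y) : ℝ))^2)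
           + ((η (x,y-1) : ℝ)^2 - (1 - (η (x,y-1) : ℝ))^2)
           + ((η (x,y+1) : ℝ)^2 - (1 - (η (x,y+1) : ℝ))^2)) := by
    rw [← Finset.sum_sub_distrib, Finset.sum_congr rfl hT0, hT]
  have e1 : (∑ i ∈ Lam L, ∑ j ∈ Lam L, if (i.1 - j.1)^2 + (i.2 - j.2)^2 = 1 then ((η' i : ℝ) - (η' j : ℝ))^2 else 0)
      = (∑ i ∈ Lam L, ∑ j ∈ Lam L, if (i.1 - j.1)^2 + (i.2 - j.2)^2 = 1 then ((η i : ℝ) - (η j : ℝ))^2 else 0)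
      + 2 * (((η (x-1,y) : ℝ)^2 - (1 - (η (x-1,y) : ℝ))^2)
           + ((η (x+1,y) : ℝ)^2 - (1 - (η (x+1,y) : ℝ))^2)
           + ((η (x,y-1) : ℝ)^2 - (1 - (η (x,y-1) : ℝ))^2)
           + ((η (x,y+1) : ℝ)^2 - (1 - (η (x,y+1) : ℝ))^2)) := by
    rw [outer', Finset.sum_add_distrib, hAB, if_neg hcf, if_neg hcf]
    linarith [hd]
  -- degeneracy (boundary-coefficient) sum is unchanged
  have e2 : ∑ i ∈ Lam L,
        ((4 : ℝ) - (((Lam L).filter fun j => (i.1 - j.1) ^ 2 + (i.2 - j.2) ^ 2 = 1)).card)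
          * (η' i : ℝ) ^ 2
      = ∑ i ∈ Lam L,
        ((4 : ℝ) - (((Lam L).filter fun j => (i.1 - j.1) ^ 2 + (i.2 - j.2) ^ 2 = 1)).card)
          * (η i : ℝ) ^ 2 := by
    have h2' :
        (∑ i ∈ Lam L, ((4 : ℝ) - (((Lam L).filter fun j => (i.1 - j.1) ^ 2 + (i.2 - j.2) ^ 2 = 1)).card) * (η' i : ℝ) ^ 2)
      = (∑ i ∈ Lam L, ((4 : ℝ) - (((Lam L).filter fun j => (i.1 - j.1) ^ 2 + (i.2 - j.2) ^ 2 = 1)).card) * (η i : ℝ) ^ 2)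
        + (((4 : ℝ) - (((Lam L).filter fun j => (x - j.1) ^ 2 + (y - j.2) ^ 2 = 1)).card) * (η' (x,y) : ℝ) ^ 2
         - ((4 : ℝ) - (((Lam L).filter fun j => (x - j.1) ^ 2 + (y - j.2) ^ 2 = 1)).card) * (η (x,y) : ℝ) ^ 2) :=
      sum_diff_single _ _ _ (x,y) h0 (fun j hj hne => by rw [hagree j hne])
    rw [h2', filter_nn L x y h1 h2 h3 h4, card_nbrs]
    norm_num
  have e3 : ∑ i ∈ Lam L, (η' i : ℝ) ^ 2 = (∑ i ∈ Lam L, (η i : ℝ) ^ 2) - 1 := by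
    have h3' : ∑ i ∈ Lam L, (η' i : ℝ) ^ 2
        = (∑ i ∈ Lam L, (η i : ℝ) ^ 2) + ((η' (x,y) : ℝ) ^ 2 - (η (x,y) : ℝ) ^ 2) :=
      sum_diff_single _ _ _ (x,y) h0 (fun j hj hne => by rw [hagree j hne])
    rw [h3', hval, hval']; push_cast; ring
  have e4 : ∑ i ∈ Lam L, (η' i : ℝ) = (∑ i ∈ Lam L, (η i : ℝ)) - 1 := by
    have h4' : ∑ i ∈ Lam L, (η' i : ℝ)
        = (∑ i ∈ Lam L, (η i : ℝ)) + ((η' (x,y) : ℝ) - (η (x,y) : ℝ)) :=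
      sum_diff_single _ _ _ (x,y) h0 (fun j hj hne => by rw [hagree j hne])
    rw [h4', hval, hval']; push_cast; ring
  simp only [H]
  rw [e1, e2, e3, e4]
  ring

lemma mem_Lam {L : ℕ} {p q : ℤ} (hp1 : 1 ≤ p) (hp2 : p ≤ L) (hq1 : 1 ≤ q) (hq2 : q ≤ L) :
    (p, q) ∈ Lam L := by
  simp only [Lam, Finset.mem_product, Finset.mem_Icc]
  exact ⟨⟨hp1, hp2⟩, ⟨hq1, hq2⟩⟩

lemma shrink_val (a b : ℤ) (m l k : ℕ) (p q : ℤ) :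
    shrinkCfg a b m l k (p, q) =
      if (a ≤ p ∧ p ≤ a + m - 1 ∧ b ≤ q ∧ q ≤ b + l - 1)
          ∧ ¬(p = a + m - 1 ∧ b + l - k ≤ q ∧ q ≤ b + l - 1) then 1 else 0 := by
  simp only [shrinkCfg, Finset.mem_sdiff, Finset.mem_product, Finset.mem_Icc,
    Finset.mem_singleton]
  split_ifs with h1 h2 <;> omega

lemma shrink_step_mid (L m l : ℕ) (a b : ℤ) (J lam h : ℝ) (k : ℕ)
    (hm : 2 ≤ m) (hk2 : k + 2 ≤ l)
    (ha : 2 ≤ a) (hb : 2 ≤ b) (haL : a + (m : ℤ) ≤ L) (hbL : b + (l : ℤ) ≤ L) :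
    H L J lam h (shrinkCfg a b m l (k + 1)) = H L J lam h (shrinkCfg a b m l k) + (lam + h) := by
  set x : ℤ := a + (m : ℤ) - 1 with hx
  set y : ℤ := b + (l : ℤ) - 1 - (k : ℤ) with hy
  have h0 : (x, y) ∈ Lam L := mem_Lam (by omega) (by omega) (by omega) (by omega)
  have h1 : (x - 1, y) ∈ Lam L := mem_Lam (by omega) (by omega) (by omega) (by omega)
  have h2 : (x + 1, y) ∈ Lam L := mem_Lam (by omega) (by omega) (by omega) (by omega)
  have h3 : (x, y - 1) ∈ Lam L := mem_Lam (by omega) (by omega) (by omega) (by omega)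
  have h4 : (x, y + 1) ∈ Lam L := mem_Lam (by omega) (by omega) (by omega) (by omega)
  have hval : shrinkCfg a b m l k (x, y) = 1 := by rw [shrink_val]; split_ifs <;> omega
  have hval' : shrinkCfg a b m l (k + 1) (x, y) = 0 := by rw [shrink_val]; split_ifs <;> omega
  have hagree : ∀ j : ℤ × ℤ, j ≠ (x, y) → shrinkCfg a b m l (k + 1) j = shrinkCfg a b m l k j := by
    rintro ⟨p, q⟩ hne
    have hne' : ¬(p = x ∧ q = y) := by simpa [Prod.ext_iff] using hne
    rw [shrink_val, shrink_val]
    split_ifs <;> omega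
  have v1 : shrinkCfg a b m l k (x - 1, y) = 1 := by rw [shrink_val]; split_ifs <;> omega
  have v2 : shrinkCfg a b m l k (x + 1, y) = 0 := by rw [shrink_val]; split_ifs <;> omega
  have v3 : shrinkCfg a b m l k (x, y - 1) = 1 := by rw [shrink_val]; split_ifs <;> omega
  have v4 : shrinkCfg a b m l k (x, y + 1) = 0 := by rw [shrink_val]; split_ifs <;> omega
  have hfl := H_flip L J lam h (shrinkCfg a b m l k) (shrinkCfg a b m l (k + 1)) x y
    h0 h1 h2 h3 h4 hval hval' hagree
  rw [hfl, v1, v2, v3, v4]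
  push_cast
  ring

lemma shrink_step_last (L m l : ℕ) (a b : ℤ) (J lam h : ℝ)
    (hm : 2 ≤ m) (hl : 1 ≤ l)
    (ha : 2 ≤ a) (hb : 2 ≤ b) (haL : a + (m : ℤ) ≤ L) (hbL : b + (l : ℤ) ≤ L) :
    H L J lam h (shrinkCfg a b m l l) =
      H L J lam h (shrinkCfg a b m l (l - 1)) - (2 * J - (lam + h)) := by
  set k : ℕ := l - 1 with hk
  have hkl : k + 1 = l := by omega
  set x : ℤ := a + (m : ℤ) - 1 with hx
  set y : ℤ := b + (l : ℤ) - 1 - (k : ℤ) with hy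
  have h0 : (x, y) ∈ Lam L := mem_Lam (by omega) (by omega) (by omega) (by omega)
  have h1 : (x - 1, y) ∈ Lam L := mem_Lam (by omega) (by omega) (by omega) (by omega)
  have h2 : (x + 1, y) ∈ Lam L := mem_Lam (by omega) (by omega) (by omega) (by omega)
  have h3 : (x, y - 1) ∈ Lam L := mem_Lam (by omega) (by omega) (by omega) (by omega)
  have h4 : (x, y + 1) ∈ Lam L := mem_Lam (by omega) (by omega) (by omega) (by omega)
  have hval : shrinkCfg a b m l k (x, y) = 1 := by rw [shrink_val]; split_ifs <;> omega
  have hval' : shrinkCfg a b m l (k + 1) (x, y) = 0 := by rw [shrink_val]; split_ifs <;> omega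
  have hagree : ∀ j : ℤ × ℤ, j ≠ (x, y) → shrinkCfg a b m l (k + 1) j = shrinkCfg a b m l k j := by
    rintro ⟨p, q⟩ hne
    have hne' : ¬(p = x ∧ q = y) := by simpa [Prod.ext_iff] using hne
    rw [shrink_val, shrink_val]
    split_ifs <;> omega
  have v1 : shrinkCfg a b m l k (x - 1, y) = 1 := by rw [shrink_val]; split_ifs <;> omega
  have v2 : shrinkCfg a b m l k (x + 1, y) = 0 := by rw [shrink_val]; split_ifs <;> omega
  have v3 : shrinkCfg a b m l k (x, y - 1) = 0 := by rw [shrink_val]; split_ifs <;> omega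
  have v4 : shrinkCfg a b m l k (x, y + 1) = 0 := by rw [shrink_val]; split_ifs <;> omega
  have hfl := H_flip L J lam h (shrinkCfg a b m l k) (shrinkCfg a b m l (k + 1)) x y
    h0 h1 h2 h3 h4 hval hval' hagree
  rw [show shrinkCfg a b m l l = shrinkCfg a b m l (k + 1) from by rw [hkl]]
  rw [hfl, v1, v2, v3, v4]
  push_cast
  ring

theorem shrink_subcritical_side (L m l : ℕ) (a b : ℤ) (J lam h : ℝ)
    (hh : 0 < h) (hhl : h < lam) (hJ : 10 * lam < J)
    (hm : 2 ≤ m) (hl : 1 ≤ l) (hsub : (l : ℝ) < 2 * J / (lam + h))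
    (ha : 2 ≤ a) (hb : 2 ≤ b) (haL : a + (m : ℤ) ≤ L) (hbL : b + (l : ℤ) ≤ L) :
    (∀ k : ℕ, k < l - 1 →
      H L J lam h (shrinkCfg a b m l (k + 1)) =
        H L J lam h (shrinkCfg a b m l k) + (lam + h)) ∧
    H L J lam h (shrinkCfg a b m l l) =
      H L J lam h (shrinkCfg a b m l (l - 1)) - (2 * J - (lam + h)) ∧
    H L J lam h (shrinkCfg a b m l l) =
      H L J lam h (shrinkCfg a b m l 0) + (lam + h) * l - 2 * J ∧
    H L J lam h (shrinkCfg a b m l l) < H L J lam h (shrinkCfg a b m l 0) ∧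
    (∀ k : ℕ, k ≤ l →
      H L J lam h (shrinkCfg a b m l k) - H L J lam h (shrinkCfg a b m l 0) ≤
        (lam + h) * ((l : ℝ) - 1)) ∧
    (lam + h) * ((l : ℝ) - 1) < 2 * J := by
  have hlh : 0 < lam + h := by linarith
  have hlhl : (lam + h) * l < 2 * J := by
    rw [lt_div_iff₀ hlh] at hsub; linarith
  have part1 : ∀ k : ℕ, k < l - 1 →
      H L J lam h (shrinkCfg a b m l (k + 1)) =
        H L J lam h (shrinkCfg a b m l k) + (lam + h) :=
    fun k hk => shrink_step_mid L m l a b J lam h k hm (by omega) ha hb haL hbL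
  have part2 := shrink_step_last L m l a b J lam h hm hl ha hb haL hbL
  have key : ∀ k : ℕ, k ≤ l - 1 →
      H L J lam h (shrinkCfg a b m l k) =
        H L J lam h (shrinkCfg a b m l 0) + (lam + h) * k := by
    intro k
    induction k with
    | zero => intro _; norm_num
    | succ n ih =>
      intro hn
      rw [part1 n (by omega), ih (by omega)]
      push_cast; ring
  have hcast : ((l - 1 : ℕ) : ℝ) = (l : ℝ) - 1 := by
    rw [Nat.cast_sub hl]; norm_num
  have keyl1 := key (l - 1) le_rfl
  have part3 : H L J lam h (shrinkCfg a b m l l) =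
      H L J lam h (shrinkCfg a b m l 0) + (lam + h) * l - 2 * J := by
    rw [part2, keyl1, hcast]; ring
  have part4 : H L J lam h (shrinkCfg a b m l l) < H L J lam h (shrinkCfg a b m l 0) := by
    rw [part3]; linarith
  have part5 : ∀ k : ℕ, k ≤ l →
      H L J lam h (shrinkCfg a b m l k) - H L J lam h (shrinkCfg a b m l 0) ≤
        (lam + h) * ((l : ℝ) - 1) := by
    intro k hk
    rcases eq_or_lt_of_le hk with rfl | hlt
    · rw [part3]
      have : (lam + h) * ((k : ℝ) - 1) = (lam + h) * k - (lam + h) := by ring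
      linarith
    · have hk1 : k ≤ l - 1 := by omega
      rw [key k hk1]
      have hkr : (k : ℝ) ≤ (l : ℝ) - 1 := by
        rw [← hcast]; exact_mod_cast hk1
      have := mul_le_mul_of_nonneg_left hkr hlh.le
      linarith
  have part6 : (lam + h) * ((l : ℝ) - 1) < 2 * J := by
    have : (lam + h) * ((l : ℝ) - 1) = (lam + h) * l - (lam + h) := by ring
    linarith
  exact ⟨part1, part2, part3, part4, part5, part6⟩
end
end
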